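/- The closure in βℕ of the set of additive idempotent ultrafilters {u ∈ βℕ : u + u = u} is a left ideal of the multiplicative semigroup (βℕ, ·). -/

import Mathlib

/-!
Left multiplication by `n` is an additive endomorphism of `ℕ`, so its extension
`w ↦ w.map (n * ·)` to `βℕ` maps additive idempotents to additive idempotents. If `A ∈ v · u`,
then `n⁻¹A ∈ u` for some `n`; since `u` lies in the closure of the idempotents, some idempotent
`w` contains `n⁻¹A`, and then the idempotent `w.map (n * ·)` contains `A`.
-/

def uadd (u v : Ultrafilter ℕ) : Ultrafilter ℕ :=
  u.bind fun x => v.map fun y => x + y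

def umul (u v : Ultrafilter ℕ) : Ultrafilter ℕ :=
  u.bind fun x => v.map fun y => x * y

namespace Ultrafilter

variable {α β : Type*}

theorem mem_closure_iff_forall_mem {S : Set (Ultrafilter α)} {u : Ultrafilter α} :
    u ∈ closure S ↔ ∀ s ∈ u, ∃ w ∈ S, s ∈ w := by
  simp only [ultrafilterBasis_is_basis.mem_closure_iff, ultrafilterBasis, Set.forall_mem_range]
  exact forall₂_congr fun _ _ => ⟨fun ⟨w, hs, hw⟩ => ⟨w, hw, hs⟩, fun ⟨w, hw, hs⟩ => ⟨w, hs, hw⟩⟩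

theorem mem_bind_iff {u : Ultrafilter α} {f : α → Ultrafilter β} {s : Set β} :
    s ∈ u.bind f ↔ {x | s ∈ f x} ∈ u :=
  Filter.mem_bind'

end Ultrafilter

open Ultrafilter

theorem uadd_map_mul_left (n : ℕ) (u v : Ultrafilter ℕ) :
    uadd (u.map (n * ·)) (v.map (n * ·)) = (uadd u v).map (n * ·) := by
  ext s
  simp [uadd, mem_bind_iff, Set.preimage, Nat.mul_add]

theorem exists_preimage_mul_left_mem_of_mem_umul {u v : Ultrafilter ℕ} {s : Set ℕ}
    (hs : s ∈ umul v u) : ∃ n : ℕ, (n * ·) ⁻¹' s ∈ u :=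
  nonempty_of_mem (mem_bind_iff.mp hs)

/-- The closure in `βℕ` of the set of additive idempotent ultrafilters is a
left ideal of the multiplicative semigroup `(βℕ, ·)`. -/
theorem stmt_12 :
    ∀ u ∈ closure {w : Ultrafilter ℕ | uadd w w = w}, ∀ v : Ultrafilter ℕ,
      umul v u ∈ closure {w : Ultrafilter ℕ | uadd w w = w} := by
  intro u hu v
  refine mem_closure_iff_forall_mem.mpr fun s hs => ?_
  obtain ⟨n, hn⟩ := exists_preimage_mul_left_mem_of_mem_umul hs
  obtain ⟨w, hw, hnw⟩ := mem_closure_iff_forall_mem.mp hu _ hn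
  refine ⟨w.map (n * ·), ?_, hnw⟩
  exact (uadd_map_mul_left n w w).trans (congrArg _ hw)
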